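/- Strict monotonicity of the exponentially rescaled Hamiltonian: let T > 0, set λ := γ̄·M + 1 and define H̃(t,x,r,p,N) := −λ·r + e^{λt}·H(x, e^{−λt}·r, e^{−λt}·p, e^{−λt}·N) for t ∈ [0,T], x, p ∈ ℝ^d, r ∈ ℝ and N a symmetric d×d matrix. Then for all t ∈ [0,T], x, p ∈ ℝ^d, every symmetric d×d matrix N, and all real numbers r₁ ≤ r₂, one has H̃(t, x, r₂, p, N) − H̃(t, x, r₁, p, N) ≤ −(r₂ − r₁). -/

import Mathlib

open scoped BigOperators
open Set Filter

noncomputable section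

/-- Clamp a real number to the interval `[-1, 1]`. -/
def clamp (r : ℝ) : ℝ := max (-1) (min 1 r)

/-- Dot product on `Fin n → ℝ`. -/
def dotp {n : ℕ} (x y : Fin n → ℝ) : ℝ := ∑ i, x i * y i

/-- The clamped branching nonlinearity `G^a(x,r)`. -/
def Gb {d : ℕ} {A : Type*} (γ : (Fin d → ℝ) → A → ℝ)
    (p : ℕ → (Fin d → ℝ) → A → ℝ) (x : Fin d → ℝ) (a : A) (r : ℝ) : ℝ :=
  γ x a * ((∑' k : ℕ, p k x a * (clamp r) ^ k) - clamp r)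

/-- The Hamiltonian
`H(x,r,p,N) = inf_a { b·p + (1/2) tr(σσᵀ N) + G^a(x,r) - c(x,a) r }`. -/
def Ham {d m : ℕ} {A : Type*} (b : (Fin d → ℝ) → A → (Fin d → ℝ))
    (σ : (Fin d → ℝ) → A → (Fin d → Fin m → ℝ))
    (γ : (Fin d → ℝ) → A → ℝ) (p : ℕ → (Fin d → ℝ) → A → ℝ)
    (c : (Fin d → ℝ) → A → ℝ)
    (x : Fin d → ℝ) (r : ℝ) (q : Fin d → ℝ) (N : Fin d → Fin d → ℝ) : ℝ :=
  ⨅ a : A, (dotp (b x a) q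
      + (1 / 2) * (∑ i, ∑ j, (∑ l, σ x a i l * σ x a j l) * N j i)
      + Gb γ p x a r - c x a * r)

/-- A modulus of continuity: nondecreasing, nonnegative, tending to `0` at `0⁺`. -/
def IsModulus (ρ : ℝ → ℝ) : Prop :=
  (∀ s, 0 ≤ ρ s) ∧ Monotone ρ ∧
    Filter.Tendsto ρ (nhdsWithin 0 (Set.Ioi 0)) (nhds 0)

/-- The continuous linear map `v ↦ dotp w v` on `Fin n → ℝ`. -/
def gradCLM {n : ℕ} (w : Fin n → ℝ) : (Fin n → ℝ) →L[ℝ] ℝ :=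
  ∑ i, w i • (ContinuousLinearMap.proj i : (Fin n → ℝ) →L[ℝ] ℝ)

/-- Test function data: a candidate test function together with its time
derivative, spatial gradient and spatial Hessian. -/
structure TestData (d : ℕ) where
  φ : ℝ → (Fin d → ℝ) → ℝ
  φt : ℝ → (Fin d → ℝ) → ℝ
  Dφ : ℝ → (Fin d → ℝ) → (Fin d → ℝ)
  D2φ : ℝ → (Fin d → ℝ) → (Fin d → Fin d → ℝ)

/-- `ψ` records a function which is `C¹` in time and `C²` in space, together with
its derivatives. -/
def IsC12 {d : ℕ} (ψ : TestData d) : Prop :=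
  (∀ s y, HasDerivAt (fun τ => ψ.φ τ y) (ψ.φt s y) s) ∧
  (∀ s y, HasFDerivAt (fun z => ψ.φ s z) (gradCLM (ψ.Dφ s y)) y) ∧
  (∀ s y i, HasFDerivAt (fun z => ψ.Dφ s z i) (gradCLM (fun j => ψ.D2φ s y i j)) y) ∧
  Continuous (fun q : ℝ × (Fin d → ℝ) => ψ.φ q.1 q.2) ∧
  Continuous (fun q : ℝ × (Fin d → ℝ) => ψ.φt q.1 q.2) ∧
  Continuous (fun q : ℝ × (Fin d → ℝ) => ψ.Dφ q.1 q.2) ∧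
  Continuous (fun q : ℝ × (Fin d → ℝ) => ψ.D2φ q.1 q.2)

/-- Viscosity subsolution of `∂ₜ u + F(t, x, u, D_x u, D²_x u) = 0` on `[0,T) × ℝ^d`. -/
def IsViscSubsoln {d : ℕ} (T : ℝ)
    (F : ℝ → (Fin d → ℝ) → ℝ → (Fin d → ℝ) → (Fin d → Fin d → ℝ) → ℝ)
    (u : ℝ → (Fin d → ℝ) → ℝ) : Prop :=
  ∀ t x, 0 ≤ t → t < T → ∀ ψ : TestData d, IsC12 ψ →
    IsLocalMaxOn (fun q : ℝ × (Fin d → ℝ) => u q.1 q.2 - ψ.φ q.1 q.2)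
      (Set.Icc (0 : ℝ) T ×ˢ (Set.univ : Set (Fin d → ℝ))) (t, x) →
    u t x = ψ.φ t x →
    0 ≤ ψ.φt t x + F t x (u t x) (ψ.Dφ t x) (ψ.D2φ t x)

/-- Viscosity supersolution of `∂ₜ u + F(t, x, u, D_x u, D²_x u) = 0` on `[0,T) × ℝ^d`. -/
def IsViscSupersoln {d : ℕ} (T : ℝ)
    (F : ℝ → (Fin d → ℝ) → ℝ → (Fin d → ℝ) → (Fin d → Fin d → ℝ) → ℝ)
    (u : ℝ → (Fin d → ℝ) → ℝ) : Prop :=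
  ∀ t x, 0 ≤ t → t < T → ∀ ψ : TestData d, IsC12 ψ →
    IsLocalMinOn (fun q : ℝ × (Fin d → ℝ) => u q.1 q.2 - ψ.φ q.1 q.2)
      (Set.Icc (0 : ℝ) T ×ˢ (Set.univ : Set (Fin d → ℝ))) (t, x) →
    u t x = ψ.φ t x →
    ψ.φt t x + F t x (u t x) (ψ.Dφ t x) (ψ.D2φ t x) ≤ 0

end

/-!
For a fixed control `a`, the map `r ↦ G^a(x, r)` is one-sided Lipschitz with constant `γ̄ M`:
`clamp` is a contraction, and on `[-1, 1]` the generating function `χ ↦ ∑ₖ pₖ χᵏ` is Lipschitz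
with constant the mean `∑ₖ k pₖ ≤ M`; moreover `-c r` is nonincreasing in `r` since `c ≥ 0`.
All terms being bounded uniformly in `a`, the infimum over `a` inherits the bound
`H(x, r₂, p, N) - H(x, r₁, p, N) ≤ γ̄ M (r₂ - r₁)`. In the rescaled Hamiltonian the factors
`e^{±λt}` cancel, so its increment is at most `(γ̄ M - λ)(r₂ - r₁) = -(r₂ - r₁)`.
-/

open Finset

-- `clamp` is definitionally the projection `Set.projIcc (-1) 1` onto `[-1, 1]`.
lemma clamp_mono : Monotone clamp :=
  (Subtype.mono_coe _).comp (Set.monotone_projIcc (by norm_num))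

lemma abs_clamp_le_one (r : ℝ) : |clamp r| ≤ 1 :=
  abs_le.mpr (Set.projIcc (-1) 1 (by norm_num) r).2

lemma abs_clamp_sub_clamp_le (r r' : ℝ) : |clamp r - clamp r'| ≤ |r - r'| :=
  Set.abs_projIcc_sub_projIcc (by norm_num)

lemma abs_pow_sub_pow_le_of_abs_le_one {a b : ℝ} (ha : |a| ≤ 1) (hb : |b| ≤ 1) (n : ℕ) :
    |a ^ n - b ^ n| ≤ n * |a - b| := by
  have hmax : max |a| |b| ^ (n - 1) ≤ 1 := pow_le_one₀ (by positivity) (max_le ha hb)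
  calc |a ^ n - b ^ n| ≤ |a - b| * n * max |a| |b| ^ (n - 1) := abs_pow_sub_pow_le a b n
    _ ≤ |a - b| * n * 1 := by gcongr
    _ = n * |a - b| := by ring

noncomputable def pgf (p : ℕ → ℝ) (χ : ℝ) : ℝ := ∑' k, p k * χ ^ k

section pgf

variable {p : ℕ → ℝ} {χ χ' : ℝ}

lemma norm_mul_pow_le (hp0 : ∀ k, 0 ≤ p k) (hχ : |χ| ≤ 1) (k : ℕ) : ‖p k * χ ^ k‖ ≤ p k := by
  rw [norm_mul, norm_pow, Real.norm_of_nonneg (hp0 k), Real.norm_eq_abs]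
  exact mul_le_of_le_one_right (hp0 k) (pow_le_one₀ (abs_nonneg χ) hχ)

lemma summable_mul_pow (hp0 : ∀ k, 0 ≤ p k) (hp : Summable p) (hχ : |χ| ≤ 1) :
    Summable fun k => p k * χ ^ k :=
  Summable.of_norm_bounded hp (norm_mul_pow_le hp0 hχ)

lemma abs_pgf_le_one (hp0 : ∀ k, 0 ≤ p k) (hp : HasSum p 1) (hχ : |χ| ≤ 1) :
    |pgf p χ| ≤ 1 :=
  tsum_of_norm_bounded (f := fun k => p k * χ ^ k) hp (norm_mul_pow_le hp0 hχ)

lemma abs_pgf_sub_pgf_le (hp0 : ∀ k, 0 ≤ p k) (hp : Summable p) {S : ℝ}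
    (hS : HasSum (fun k : ℕ => (k : ℝ) * p k) S) (hχ : |χ| ≤ 1) (hχ' : |χ'| ≤ 1) :
    |pgf p χ - pgf p χ'| ≤ S * |χ - χ'| := by
  rw [pgf, pgf, ← (summable_mul_pow hp0 hp hχ).tsum_sub (summable_mul_pow hp0 hp hχ')]
  refine tsum_of_norm_bounded (f := fun k => p k * χ ^ k - p k * χ' ^ k)
    (hS.mul_right |χ - χ'|) fun k => ?_
  rw [← mul_sub, norm_mul, Real.norm_of_nonneg (hp0 k), Real.norm_eq_abs, mul_comm (k : ℝ),
    mul_assoc]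
  exact mul_le_mul_of_nonneg_left (abs_pow_sub_pow_le_of_abs_le_one hχ hχ' k) (hp0 k)

end pgf

lemma ciInf_le_ciInf_add {ι : Type*} [Nonempty ι] {f g : ι → ℝ} (hg : BddBelow (Set.range g))
    {C : ℝ} (h : ∀ i, g i ≤ f i + C) : ⨅ i, g i ≤ (⨅ i, f i) + C :=
  sub_le_iff_le_add.mp <| le_ciInf fun i => sub_le_iff_le_add.mpr <| (ciInf_le hg i).trans (h i)

lemma abs_dotp_le {n : ℕ} (u v : Fin n → ℝ) : |dotp u v| ≤ ‖u‖ * ∑ i, |v i| := by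
  rw [mul_sum]
  refine (abs_sum_le_sum_abs _ _).trans (sum_le_sum fun i _ => ?_)
  rw [abs_mul, ← Real.norm_eq_abs (u i)]
  exact mul_le_mul_of_nonneg_right (norm_le_pi_norm u i) (abs_nonneg _)

lemma abs_trace_mul_le {d m : ℕ} (σ : Fin d → Fin m → ℝ) (N : Fin d → Fin d → ℝ) :
    |∑ i, ∑ j, (∑ l, σ i l * σ j l) * N j i| ≤ ∑ i, ∑ j, m * ‖σ‖ ^ 2 * |N j i| := by
  have hentry : ∀ i l, |σ i l| ≤ ‖σ‖ := fun i l =>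
    (norm_le_pi_norm (σ i) l).trans (norm_le_pi_norm σ i)
  refine (abs_sum_le_sum_abs _ _).trans (sum_le_sum fun i _ =>
    (abs_sum_le_sum_abs _ _).trans (sum_le_sum fun j _ => ?_))
  rw [abs_mul]
  gcongr
  calc |∑ l, σ i l * σ j l| ≤ ∑ l, |σ i l * σ j l| := abs_sum_le_sum_abs _ _
    _ ≤ ∑ _l : Fin m, ‖σ‖ ^ 2 := sum_le_sum fun l _ => by
      rw [abs_mul, sq]; exact mul_le_mul (hentry i l) (hentry j l) (abs_nonneg _) (norm_nonneg _)
    _ = m * ‖σ‖ ^ 2 := by simp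

section Hamiltonian

variable {d m : ℕ} {A : Type*} (b : (Fin d → ℝ) → A → (Fin d → ℝ))
  (σ : (Fin d → ℝ) → A → (Fin d → Fin m → ℝ)) (γ : (Fin d → ℝ) → A → ℝ)
  (p : ℕ → (Fin d → ℝ) → A → ℝ) (c : (Fin d → ℝ) → A → ℝ) (x : Fin d → ℝ)

lemma Gb_eq_pgf (a : A) (r : ℝ) :
    Gb γ p x a r = γ x a * (pgf (fun k => p k x a) (clamp r) - clamp r) := rfl

variable {γ p} {a : A}

lemma abs_Gb_le (hγ : 0 ≤ γ x a) (hp0 : ∀ k, 0 ≤ p k x a) (hp : HasSum (fun k => p k x a) 1)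
    (r : ℝ) : |Gb γ p x a r| ≤ 2 * γ x a := by
  rw [Gb_eq_pgf, abs_mul, abs_of_nonneg hγ, mul_comm]
  gcongr
  calc _ ≤ |pgf (fun k => p k x a) (clamp r)| + |clamp r| := abs_sub _ _
    _ ≤ 2 := by linarith [abs_pgf_le_one hp0 hp (abs_clamp_le_one r), abs_clamp_le_one r]

lemma Gb_sub_Gb_le (hγ : 0 ≤ γ x a) (hp0 : ∀ k, 0 ≤ p k x a) (hp : Summable fun k => p k x a)
    {S : ℝ} (hS : HasSum (fun k : ℕ => (k : ℝ) * p k x a) S) {r₁ r₂ : ℝ} (hr : r₁ ≤ r₂) :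
    Gb γ p x a r₂ - Gb γ p x a r₁ ≤ γ x a * S * (r₂ - r₁) := by
  have hS0 : 0 ≤ S := hS.nonneg fun k => mul_nonneg k.cast_nonneg (hp0 k)
  have hclamp : 0 ≤ clamp r₂ - clamp r₁ := sub_nonneg.mpr (clamp_mono hr)
  have hpgf := (le_abs_self _).trans <| abs_pgf_sub_pgf_le hp0 hp hS
    (abs_clamp_le_one r₂) (abs_clamp_le_one r₁)
  have hlip : |clamp r₂ - clamp r₁| ≤ r₂ - r₁ :=
    (abs_clamp_sub_clamp_le r₂ r₁).trans (abs_of_nonneg (sub_nonneg.mpr hr)).le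
  rw [Gb_eq_pgf, Gb_eq_pgf, ← mul_sub, mul_assoc]
  gcongr
  nlinarith

variable (γ p) in
noncomputable def hamIntegrand (r : ℝ) (q : Fin d → ℝ) (N : Fin d → Fin d → ℝ) (a : A) : ℝ :=
  dotp (b x a) q + (1 / 2) * (∑ i, ∑ j, (∑ l, σ x a i l * σ x a j l) * N j i)
    + Gb γ p x a r - c x a * r

variable (γ p) in
lemma Ham_eq_iInf (r : ℝ) (q : Fin d → ℝ) (N : Fin d → Fin d → ℝ) :
    Ham b σ γ p c x r q N = ⨅ a, hamIntegrand b σ γ p c x r q N a := rfl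

lemma bddBelow_range_hamIntegrand {Cb Cσ Cc γbar : ℝ} (hb : ∀ a, ‖b x a‖ ≤ Cb)
    (hσ : ∀ a, ‖σ x a‖ ≤ Cσ) (hγ : ∀ a, γ x a ∈ Set.Icc 0 γbar)
    (hp0 : ∀ k a, 0 ≤ p k x a) (hp : ∀ a, HasSum (fun k => p k x a) 1)
    (hc0 : ∀ a, 0 ≤ c x a) (hc : ∀ a, c x a ≤ Cc)
    (r : ℝ) (q : Fin d → ℝ) (N : Fin d → Fin d → ℝ) :
    BddBelow (Set.range (hamIntegrand b σ γ p c x r q N)) := by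
  refine ⟨-(Cb * ∑ i, |q i|) - (1 / 2) * (∑ i, ∑ j, m * Cσ ^ 2 * |N j i|) - 2 * γbar - Cc * |r|,
    Set.forall_mem_range.mpr fun a => ?_⟩
  have hdot : |dotp (b x a) q| ≤ Cb * ∑ i, |q i| :=
    (abs_dotp_le _ _).trans (by gcongr; exact hb a)
  have htr : |∑ i, ∑ j, (∑ l, σ x a i l * σ x a j l) * N j i| ≤ ∑ i, ∑ j, m * Cσ ^ 2 * |N j i| :=
    (abs_trace_mul_le _ _).trans (by gcongr; exact hσ a)
  have hG := abs_Gb_le x (hγ a).1 (fun k => hp0 k a) (hp a) r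
  have hcr : c x a * r ≤ Cc * |r| :=
    (le_abs_self _).trans (by rw [abs_mul, abs_of_nonneg (hc0 a)]; gcongr; exact hc a)
  rw [abs_le] at hdot htr hG
  simp only [hamIntegrand]
  linarith [(hγ a).2]

lemma hamIntegrand_le_add {γbar M : ℝ} (hγ : γ x a ∈ Set.Icc 0 γbar) (hp0 : ∀ k, 0 ≤ p k x a)
    (hp : Summable fun k => p k x a)
    (hpmean : ∃ S, S ≤ M ∧ HasSum (fun k : ℕ => (k : ℝ) * p k x a) S) (hc0 : 0 ≤ c x a)
    (q : Fin d → ℝ) (N : Fin d → Fin d → ℝ) {r₁ r₂ : ℝ} (hr : r₁ ≤ r₂) :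
    hamIntegrand b σ γ p c x r₂ q N a
      ≤ hamIntegrand b σ γ p c x r₁ q N a + γbar * M * (r₂ - r₁) := by
  obtain ⟨S, hSM, hS⟩ := hpmean
  have hG := Gb_sub_Gb_le x hγ.1 hp0 hp hS hr
  have hS0 : 0 ≤ S := hS.nonneg fun k => mul_nonneg k.cast_nonneg (hp0 k)
  have hγS : γ x a * S ≤ γbar * M := mul_le_mul hγ.2 hSM hS0 (hγ.1.trans hγ.2)
  have hcr : c x a * r₁ ≤ c x a * r₂ := mul_le_mul_of_nonneg_left hr hc0
  simp only [hamIntegrand]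
  nlinarith [mul_le_mul_of_nonneg_right hγS (sub_nonneg.mpr hr)]

lemma Ham_le_Ham_add [Nonempty A] {Cb Cσ Cc γbar M : ℝ} (hb : ∀ a, ‖b x a‖ ≤ Cb)
    (hσ : ∀ a, ‖σ x a‖ ≤ Cσ) (hγ : ∀ a, γ x a ∈ Set.Icc 0 γbar)
    (hp0 : ∀ k a, 0 ≤ p k x a) (hp : ∀ a, HasSum (fun k => p k x a) 1)
    (hpmean : ∀ a, ∃ S, S ≤ M ∧ HasSum (fun k : ℕ => (k : ℝ) * p k x a) S)
    (hc0 : ∀ a, 0 ≤ c x a) (hc : ∀ a, c x a ≤ Cc)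
    (q : Fin d → ℝ) (N : Fin d → Fin d → ℝ) {r₁ r₂ : ℝ} (hr : r₁ ≤ r₂) :
    Ham b σ γ p c x r₂ q N ≤ Ham b σ γ p c x r₁ q N + γbar * M * (r₂ - r₁) := by
  rw [Ham_eq_iInf, Ham_eq_iInf]
  exact ciInf_le_ciInf_add (bddBelow_range_hamIntegrand b σ c x hb hσ hγ hp0 hp hc0 hc r₂ q N)
    fun a => hamIntegrand_le_add b σ c x (hγ a) (hp0 · a) (hp a).summable (hpmean a) (hc0 a)
      q N hr

end Hamiltonian

theorem rescaled_hamiltonian_strict_monotone_general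
    (d m : ℕ)
    (A : Type) [Nonempty A]
    (γbar M : ℝ)
    (b : (Fin d → ℝ) → A → (Fin d → ℝ))
    (σ : (Fin d → ℝ) → A → (Fin d → Fin m → ℝ))
    (γ : (Fin d → ℝ) → A → ℝ)
    (p : ℕ → (Fin d → ℝ) → A → ℝ)
    (c : (Fin d → ℝ) → A → ℝ)
    (hb_bdd : ∃ C, ∀ x a, ‖b x a‖ ≤ C)
    (hσ_bdd : ∃ C, ∀ x a, ‖σ x a‖ ≤ C)
    (hγ : ∀ x a, γ x a ∈ Set.Icc (0 : ℝ) γbar)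
    (hp01 : ∀ k x a, p k x a ∈ Set.Icc (0 : ℝ) 1)
    (hpsum : ∀ x a, HasSum (fun k => p k x a) 1)
    (hpmean : ∀ x a, ∃ S, S ≤ M ∧ HasSum (fun k : ℕ => (k : ℝ) * p k x a) S)
    (hc0 : ∀ x a, 0 ≤ c x a) (hc_bdd : ∃ C, ∀ x a, c x a ≤ C)
    (t : ℝ)
    (x q : Fin d → ℝ) (N : Fin d → Fin d → ℝ)
    (r₁ r₂ : ℝ) (hr : r₁ ≤ r₂) :
    (fun (lam : ℝ) =>
        ((-lam * r₂ + Real.exp (lam * t) *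
            Ham b σ γ p c x (Real.exp (-lam * t) * r₂)
              (fun i => Real.exp (-lam * t) * q i)
              (fun i j => Real.exp (-lam * t) * N i j))
          - (-lam * r₁ + Real.exp (lam * t) *
            Ham b σ γ p c x (Real.exp (-lam * t) * r₁)
              (fun i => Real.exp (-lam * t) * q i)
              (fun i j => Real.exp (-lam * t) * N i j))))
      (γbar * M + 1) ≤ -(r₂ - r₁) := by
  obtain ⟨Cb, hCb⟩ := hb_bdd
  obtain ⟨Cσ, hCσ⟩ := hσ_bdd
  obtain ⟨Cc, hCc⟩ := hc_bdd
  beta_reduce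
  set s := Real.exp (-(γbar * M + 1) * t)
  set e := Real.exp ((γbar * M + 1) * t)
  have hs : 0 < s := Real.exp_pos _
  have he : 0 < e := Real.exp_pos _
  have hes : e * s = 1 := by rw [← Real.exp_add]; ring_nf; exact Real.exp_zero
  have hHam := Ham_le_Ham_add b σ c x (hCb x) (hCσ x) (hγ x) (fun k => (hp01 k x · |>.1))
    (hpsum x) (hpmean x) (hc0 x) (hCc x) (fun i => s * q i) (fun i j => s * N i j)
    (mul_le_mul_of_nonneg_left hr hs.le)
  have hscaled := mul_le_mul_of_nonneg_left hHam he.le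
  linear_combination hscaled + γbar * M * (r₂ - r₁) * hes

/-- Strict monotonicity of the exponentially rescaled
Hamiltonian `H̃(t,x,r,p,N) = −λr + e^{λt} H(x, e^{−λt} r, e^{−λt} p, e^{−λt} N)`
with `λ = γ̄·M + 1`: for `r₁ ≤ r₂`,
`H̃(t,x,r₂,p,N) − H̃(t,x,r₁,p,N) ≤ −(r₂ − r₁)`. -/
theorem rescaled_hamiltonian_strict_monotone
    (d m : ℕ) (hd : 0 < d) (hm : 0 < m)
    (A : Type) [Nonempty A]
    (γbar M : ℝ) (hγbar : 0 < γbar) (hM : 0 < M)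
    (b : (Fin d → ℝ) → A → (Fin d → ℝ))
    (σ : (Fin d → ℝ) → A → (Fin d → Fin m → ℝ))
    (γ : (Fin d → ℝ) → A → ℝ)
    (p : ℕ → (Fin d → ℝ) → A → ℝ)
    (c : (Fin d → ℝ) → A → ℝ)
    (hb_bdd : ∃ C, ∀ x a, ‖b x a‖ ≤ C)
    (hσ_bdd : ∃ C, ∀ x a, ‖σ x a‖ ≤ C)
    (hγ : ∀ x a, γ x a ∈ Set.Icc (0 : ℝ) γbar)
    (hp01 : ∀ k x a, p k x a ∈ Set.Icc (0 : ℝ) 1)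
    (hpsum : ∀ x a, HasSum (fun k => p k x a) 1)
    (hpmean : ∀ x a, ∃ S, S ≤ M ∧ HasSum (fun k : ℕ => (k : ℝ) * p k x a) S)
    (hc0 : ∀ x a, 0 ≤ c x a) (hc_bdd : ∃ C, ∀ x a, c x a ≤ C)
    (T : ℝ) (hT : 0 < T)
    (t : ℝ) (ht : t ∈ Set.Icc (0 : ℝ) T)
    (x q : Fin d → ℝ) (N : Fin d → Fin d → ℝ) (hN : ∀ i j, N i j = N j i)
    (r₁ r₂ : ℝ) (hr : r₁ ≤ r₂) :
    (fun (lam : ℝ) =>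
        ((-lam * r₂ + Real.exp (lam * t) *
            Ham b σ γ p c x (Real.exp (-lam * t) * r₂)
              (fun i => Real.exp (-lam * t) * q i)
              (fun i j => Real.exp (-lam * t) * N i j))
          - (-lam * r₁ + Real.exp (lam * t) *
            Ham b σ γ p c x (Real.exp (-lam * t) * r₁)
              (fun i => Real.exp (-lam * t) * q i)
              (fun i j => Real.exp (-lam * t) * N i j))))
      (γbar * M + 1) ≤ -(r₂ - r₁) :=
  rescaled_hamiltonian_strict_monotone_general d m A γbar M b σ γ p c hb_bdd hσ_bdd hγ hp01 hpsum
    hpmean hc0 hc_bdd t x q N r₁ r₂ hr
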